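/- arXiv:1805.06108 — 2 statements merged into one kernel-verified Lean document; each statement's English description precedes it below -/
import Mathlib

section
/- For every δ > 0 there exist constants c̄ > 0 and Ā > 0, depending only on δ, such that for all real α, β with min(α,β) ≥ √2 + δ and all c₁, c₂ > 0 satisfying c₁ = α·A(c₁,c₂) and c₂ = β·A(c₁,c₂), one has min(c₁,c₂) ≥ c̄ and A(c₁,c₂) ≥ Ā. -/
/-!
With `f x = x / (eˣ - 1)` we have `A(c₁,c₂)² = ∫₀^{c₁} (f x - f (x + c₂)) dx`. As `f` is
decreasing and `f x = 1 - x/2 + O(x²)` near `0`, every `0 < u ≤ min c₁ c₂` with `u ≤ 1/4`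
gives `A² ≥ u² (1/2 - 2u)`. The equations give `(√2 + δ) A ≤ m := min c₁ c₂`, so taking
`u = m` forces `1/2 - 2m ≤ 1/(√2 + δ)²`, i.e. `m ≥ ε/2` with `ε = 1/2 - 1/(√2 + δ)² > 0`;
taking `u = ε/2` then yields `A ≥ ε / (2 (√2 + δ))`.
-/

/-- `A(c₁,c₂) = sqrt(∫_0^{c₁} x/(eˣ−1) dx − ∫_{c₂}^{c₁+c₂} x/(eˣ−1) dx)`. -/
noncomputable def A (c₁ c₂ : ℝ) : ℝ :=
  Real.sqrt ((∫ x in (0 : ℝ)..c₁, x / (Real.exp x - 1)) -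
    ∫ x in c₂..(c₁ + c₂), x / (Real.exp x - 1))

open Real Set MeasureTheory intervalIntegral

/-- `xDivExpSubOne 0 = 0` (division by zero) rather than the limit `1`; a single point does not
affect the integrals. -/
noncomputable def xDivExpSubOne (x : ℝ) : ℝ := x / (exp x - 1)

lemma xDivExpSubOne_nonneg {x : ℝ} (hx : 0 ≤ x) : 0 ≤ xDivExpSubOne x := by
  rcases hx.eq_or_lt with rfl | hx
  · simp [xDivExpSubOne]
  · exact div_nonneg hx.le (sub_pos.2 (one_lt_exp_iff.2 hx)).le

lemma xDivExpSubOne_le_one {x : ℝ} (hx : 0 ≤ x) : xDivExpSubOne x ≤ 1 := by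
  rcases hx.eq_or_lt with rfl | hx
  · simp [xDivExpSubOne]
  · rw [xDivExpSubOne, div_le_one (sub_pos.2 (one_lt_exp_iff.2 hx))]
    linarith [add_one_le_exp x]

lemma antitoneOn_xDivExpSubOne : AntitoneOn xDivExpSubOne (Ioi 0) := by
  intro x hx y hy hxy
  have hslope : (exp x - exp 0) / (x - 0) ≤ (exp y - exp 0) / (y - 0) :=
    convexOn_exp.secant_mono (mem_univ 0) (mem_univ x) (mem_univ y) (ne_of_gt hx)
      (ne_of_gt hy) hxy
  simp only [exp_zero, sub_zero] at hslope
  have hx' : 0 < (exp x - 1) / x := div_pos (sub_pos.2 (one_lt_exp_iff.2 hx)) hx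
  simpa only [xDivExpSubOne, inv_div] using inv_anti₀ hx' hslope

lemma one_sub_le_xDivExpSubOne {x : ℝ} (hx : 0 < x) (hx₁ : x ≤ 1) :
    1 - (x / 2 + 2 / 9 * x ^ 2) ≤ xDivExpSubOne x := by
  have hexp := exp_bound' hx.le hx₁ (n := 3) (by norm_num)
  norm_num [Finset.sum_range_succ, Nat.factorial] at hexp
  rw [xDivExpSubOne, le_div_iff₀ (sub_pos.2 (one_lt_exp_iff.2 hx))]
  nlinarith [pow_pos hx 3, pow_pos hx 4, pow_pos hx 5]

lemma xDivExpSubOne_le {y : ℝ} (hy : 0 ≤ y) : xDivExpSubOne y ≤ 1 - y / 2 + y ^ 2 / 4 := by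
  rcases hy.eq_or_lt with rfl | hy
  · simp [xDivExpSubOne]
  rw [xDivExpSubOne, div_le_iff₀ (sub_pos.2 (one_lt_exp_iff.2 hy))]
  nlinarith [quadratic_le_exp_of_nonneg hy.le, pow_pos hy 3, pow_pos hy 4]

lemma intervalIntegrable_xDivExpSubOne {a b : ℝ} (ha : 0 ≤ a) (hb : 0 ≤ b) :
    IntervalIntegrable xDivExpSubOne volume a b := by
  rw [intervalIntegrable_iff]
  refine Measure.integrableOn_of_bounded (M := 1) measure_Ioc_lt_top.ne
    (by unfold xDivExpSubOne; fun_prop : Measurable xDivExpSubOne).aestronglyMeasurable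
    (ae_restrict_of_forall_mem measurableSet_uIoc fun x hx => ?_)
  have hx₀ : 0 ≤ x := by
    rcases mem_uIoc.mp hx with h | h
    · exact ha.trans h.1.le
    · exact hb.trans h.1.le
  rw [Real.norm_eq_abs, abs_of_nonneg (xDivExpSubOne_nonneg hx₀)]
  exact xDivExpSubOne_le_one hx₀

lemma intervalIntegrable_xDivExpSubOne_comp_add {a b c : ℝ} (ha : 0 ≤ a + c) (hb : 0 ≤ b + c) :
    IntervalIntegrable (fun x => xDivExpSubOne (x + c)) volume a b := by
  simpa using (intervalIntegrable_xDivExpSubOne ha hb).comp_add_right c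

lemma sub_xDivExpSubOne_comp_add_ge {x u h : ℝ} (hx : 0 < x) (hxu : x ≤ u) (hu : u ≤ 1)
    (huh : u ≤ h) : u * (1 / 2 - 2 * u) ≤ xDivExpSubOne x - xDivExpSubOne (x + h) := by
  have hshift : xDivExpSubOne (x + h) ≤ xDivExpSubOne (x + u) :=
    antitoneOn_xDivExpSubOne (by simp only [mem_Ioi]; linarith)
      (by simp only [mem_Ioi]; linarith) (by linarith)
  have hlow := one_sub_le_xDivExpSubOne hx (hxu.trans hu)
  have hup := xDivExpSubOne_le (by linarith : 0 ≤ x + u)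
  nlinarith

lemma A_eq_sqrt_integral {c₁ c₂ : ℝ} (h₁ : 0 ≤ c₁) (h₂ : 0 ≤ c₂) :
    A c₁ c₂ = √(∫ x in (0 : ℝ)..c₁, (xDivExpSubOne x - xDivExpSubOne (x + c₂))) := by
  have hshift := integral_comp_add_right (a := 0) (b := c₁) xDivExpSubOne c₂
  rw [zero_add] at hshift
  rw [A, integral_sub (intervalIntegrable_xDivExpSubOne le_rfl h₁)
    (intervalIntegrable_xDivExpSubOne_comp_add (by linarith) (by linarith)), hshift]
  rfl

lemma sq_mul_le_integral_sub_comp_add {u c₁ c₂ : ℝ} (hu : 0 < u) (hu₁ : u ≤ 1) (h₁ : u ≤ c₁)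
    (h₂ : u ≤ c₂) :
    u ^ 2 * (1 / 2 - 2 * u) ≤
      ∫ x in (0 : ℝ)..c₁, (xDivExpSubOne x - xDivExpSubOne (x + c₂)) := by
  have hint : ∀ a b : ℝ, 0 ≤ a → 0 ≤ b →
      IntervalIntegrable (fun x => xDivExpSubOne x - xDivExpSubOne (x + c₂)) volume a b :=
    fun a b ha hb => (intervalIntegrable_xDivExpSubOne ha hb).sub
      (intervalIntegrable_xDivExpSubOne_comp_add (by linarith) (by linarith))
  rw [← integral_add_adjacent_intervals (hint 0 u le_rfl hu.le) (hint u c₁ hu.le (by linarith))]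
  have hhead : u ^ 2 * (1 / 2 - 2 * u) ≤
      ∫ x in (0 : ℝ)..u, (xDivExpSubOne x - xDivExpSubOne (x + c₂)) := by
    have := integral_mono_on_of_le_Ioo hu.le intervalIntegrable_const (hint 0 u le_rfl hu.le)
      fun x hx => sub_xDivExpSubOne_comp_add_ge hx.1 hx.2.le hu₁ h₂
    simp only [intervalIntegral.integral_const, sub_zero, smul_eq_mul] at this
    linarith
  have htail : 0 ≤ ∫ x in u..c₁, (xDivExpSubOne x - xDivExpSubOne (x + c₂)) :=
    integral_nonneg h₁ fun x hx => sub_nonneg.2 <|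
      antitoneOn_xDivExpSubOne (hu.trans_le hx.1) (by simp only [mem_Ioi]; linarith [hx.1])
        (by linarith)
  linarith

lemma sq_mul_le_A_sq {u c₁ c₂ : ℝ} (hu : 0 < u) (hu₄ : u ≤ 1 / 4) (h₁ : u ≤ c₁) (h₂ : u ≤ c₂) :
    u ^ 2 * (1 / 2 - 2 * u) ≤ A c₁ c₂ ^ 2 := by
  have hI := sq_mul_le_integral_sub_comp_add hu (by linarith) h₁ h₂
  rw [A_eq_sqrt_integral (by linarith) (by linarith),
    sq_sqrt ((mul_nonneg (sq_nonneg u) (by linarith)).trans hI)]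
  exact hI

lemma le_min_of_mul_A_le_min {q c₁ c₂ : ℝ} (hq : 0 < q) (h₁ : 0 < c₁) (h₂ : 0 < c₂)
    (hA : q * A c₁ c₂ ≤ min c₁ c₂) : (1 / 2 - 1 / q ^ 2) / 2 ≤ min c₁ c₂ := by
  set m := min c₁ c₂
  by_contra! hm
  have hm₀ : 0 < m := lt_min h₁ h₂
  have hlow := sq_mul_le_A_sq hm₀ (by linarith [show 0 < 1 / q ^ 2 by positivity])
    (min_le_left c₁ c₂) (min_le_right c₁ c₂)
  have hup : q ^ 2 * A c₁ c₂ ^ 2 ≤ m ^ 2 := by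
    rw [← mul_pow]
    exact pow_le_pow_left₀ (mul_nonneg hq.le (sqrt_nonneg _)) hA 2
  have hm₂ : m ^ 2 * (q ^ 2 * (1 / 2 - 2 * m)) ≤ m ^ 2 * 1 := by
    nlinarith [mul_le_mul_of_nonneg_left hlow (sq_nonneg q)]
  have : 1 / 2 - 2 * m ≤ 1 / q ^ 2 := by
    rw [le_div_iff₀ (by positivity), mul_comm]
    exact le_of_mul_le_mul_left hm₂ (by positivity)
  linarith

theorem lower_bounds_of_c_and_A (δ : ℝ) (hδ : 0 < δ) :
    ∃ cbar : ℝ, 0 < cbar ∧ ∃ Abar : ℝ, 0 < Abar ∧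
      ∀ α β c₁ c₂ : ℝ, Real.sqrt 2 + δ ≤ min α β → 0 < c₁ → 0 < c₂ →
        c₁ = α * A c₁ c₂ → c₂ = β * A c₁ c₂ →
        cbar ≤ min c₁ c₂ ∧ Abar ≤ A c₁ c₂ := by
  set q := √2 + δ
  have hq : 0 < q := by positivity
  have hq₂ : 2 < q ^ 2 := by nlinarith [sq_sqrt (zero_le_two : (0 : ℝ) ≤ 2), sqrt_nonneg 2]
  set ε := 1 / 2 - 1 / q ^ 2 with hε_def
  have hε : 0 < ε := by linarith [one_div_lt_one_div_of_lt two_pos hq₂]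
  have hε₂ : ε < 1 / 2 := by linarith [show 0 < 1 / q ^ 2 by positivity]
  refine ⟨ε / 2, by positivity, ε / 2 / q, by positivity, fun α β c₁ c₂ hαβ h₁ h₂ hc₁ hc₂ => ?_⟩
  have hA₀ : 0 ≤ A c₁ c₂ := sqrt_nonneg _
  have hA : q * A c₁ c₂ ≤ min c₁ c₂ :=
    le_min ((mul_le_mul_of_nonneg_right (hαβ.trans (min_le_left α β)) hA₀).trans_eq hc₁.symm)
      ((mul_le_mul_of_nonneg_right (hαβ.trans (min_le_right α β)) hA₀).trans_eq hc₂.symm)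
  have hmin := le_min_of_mul_A_le_min hq h₁ h₂ hA
  refine ⟨hmin, ?_⟩
  have hlow := sq_mul_le_A_sq (by positivity) (by linarith) (hmin.trans (min_le_left c₁ c₂))
    (hmin.trans (min_le_right c₁ c₂))
  have hAbar : (ε / 2 / q) ^ 2 = (ε / 2) ^ 2 * (1 / 2 - 2 * (ε / 2)) := by
    rw [hε_def]; field_simp; ring
  exact (pow_le_pow_iff_left₀ (by positivity) hA₀ two_ne_zero).1 (hAbar ▸ hlow)
end

section
/- Define ζ(c) = c²/(e^c − 1) − 2c·log(1 − e^{−c}) + 2·Li₂(e^{−c}) for c > 0. Then ζ is differentiable on (0, ∞) with ζ'(c) = −c²e^c/(e^c − 1)² < 0, so ζ is strictly decreasing on (0, ∞); moreover ζ(c) → π²/3 as c → 0⁺ and ζ(c) → 0 as c → ∞. -/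
open scoped Real

/-- The dilogarithm `Li₂(x) = ∑_{k=1}^∞ x^k / k²`. -/
noncomputable def Li2 (x : ℝ) : ℝ := ∑' k : ℕ, x ^ (k + 1) / ((k : ℝ) + 1) ^ 2

/-- `ζ(c) = c²/(e^c − 1) − 2c·log(1 − e^{−c}) + 2·Li₂(e^{−c})`. -/
noncomputable def zeta (c : ℝ) : ℝ :=
  c ^ 2 / (Real.exp c - 1) - 2 * c * Real.log (1 - Real.exp (-c)) + 2 * Li2 (Real.exp (-c))

open Real Filter Topology Set

/-!
Term-by-term differentiation gives `Li₂'(x) = -log (1 - x) / x`, so `d/dc Li₂(e^{-c}) =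
log (1 - e^{-c})`. This cancels the logarithm produced by the product rule in
`-2c·log (1 - e^{-c})`, leaving `ζ'(c) = (c²/(e^c - 1))' - 2c/(e^c - 1) = -c²e^c/(e^c - 1)²`.
For the limits, `c²/(e^c - 1)` and `c·log (1 - e^{-c})` tend to `0` both as `c → 0⁺` and as
`c → ∞`, while `Li₂` is continuous on `[-1, 1]` (M-test against `∑ 1/k²`) with
`Li₂(1) = ζ(2) = π²/6` and `Li₂(0) = 0`.
-/

lemma Li2_zero : Li2 0 = 0 := by
  simp [Li2]

lemma hasSum_one_div_succ_sq :
    HasSum (fun n : ℕ => 1 / ((n : ℝ) + 1) ^ 2) (π ^ 2 / 6) := by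
  simpa using (hasSum_nat_add_iff' 1).mpr hasSum_zeta_two

lemma Li2_one : Li2 1 = π ^ 2 / 6 := by
  simpa [Li2] using hasSum_one_div_succ_sq.tsum_eq

lemma continuousOn_Li2 : ContinuousOn Li2 (Icc (-1) 1) := by
  refine continuousOn_tsum (fun n => (continuousOn_pow _).div_const _)
    hasSum_one_div_succ_sq.summable fun n x hx => ?_
  rw [norm_div, norm_pow, norm_of_nonneg (by positivity : (0 : ℝ) ≤ ((n : ℝ) + 1) ^ 2)]
  gcongr
  exact pow_le_one₀ (norm_nonneg x) (abs_le.mpr hx)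

lemma hasDerivAt_Li2_tsum {x : ℝ} (hx : |x| < 1) :
    HasDerivAt Li2 (∑' n : ℕ, x ^ n / ((n : ℝ) + 1)) x := by
  obtain ⟨r, hxr, hr1⟩ := exists_between hx
  have hr0 : 0 < r := (abs_nonneg x).trans_lt hxr
  refine hasDerivAt_tsum_of_isPreconnected (summable_geometric_of_lt_one hr0.le hr1) isOpen_Ioo
    (convex_Ioo (-r) r).isPreconnected (u := fun n : ℕ => r ^ n)
    (g' := fun n y => y ^ n / ((n : ℝ) + 1)) (fun n y _ => ?_) (fun n y hy => ?_) (y₀ := 0)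
    ⟨by linarith, hr0⟩ ?_ (abs_lt.mp hxr)
  · refine ((hasDerivAt_pow (n + 1) y).div_const _).congr_deriv ?_
    push_cast
    field_simp
  · rw [norm_div, norm_pow]
    calc ‖y‖ ^ n / ‖(n : ℝ) + 1‖ ≤ ‖y‖ ^ n :=
          div_le_self (by positivity) (by rw [norm_of_nonneg (by positivity)]; simp)
      _ ≤ r ^ n := pow_le_pow_left₀ (norm_nonneg y) (abs_lt.mpr hy).le n
  · simp

lemma hasDerivAt_Li2 {x : ℝ} (hx : |x| < 1) (hx0 : x ≠ 0) :
    HasDerivAt Li2 (-log (1 - x) / x) x := by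
  have hsum : HasSum (fun n : ℕ => x ^ n / ((n : ℝ) + 1)) (-log (1 - x) / x) :=
    ((hasSum_pow_div_log_of_abs_lt_one hx).div_const x).congr_fun fun n => by
      rw [pow_succ]
      field_simp
  exact hsum.tsum_eq ▸ hasDerivAt_Li2_tsum hx

lemma exp_sub_one_ne_zero {x : ℝ} (hx : x ≠ 0) : exp x - 1 ≠ 0 :=
  sub_ne_zero.mpr (by simpa using hx)

lemma hasDerivAt_exp_neg (c : ℝ) : HasDerivAt (fun c => exp (-c)) (-exp (-c)) c := by
  simpa using (hasDerivAt_neg c).exp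

lemma hasDerivAt_log_one_sub_exp_neg {c : ℝ} (hc : c ≠ 0) :
    HasDerivAt (fun c => log (1 - exp (-c))) (exp c - 1)⁻¹ c := by
  have hu : 1 - exp (-c) ≠ 0 := sub_ne_zero.mpr (Ne.symm (by simpa using hc))
  have he := exp_sub_one_ne_zero hc
  refine (((hasDerivAt_exp_neg c).const_sub 1).log hu).congr_deriv ?_
  rw [exp_neg] at hu ⊢
  field_simp

lemma hasDerivAt_Li2_exp_neg {c : ℝ} (hc : 0 < c) :
    HasDerivAt (fun c => Li2 (exp (-c))) (log (1 - exp (-c))) c := by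
  have h1 : |exp (-c)| < 1 := by
    rw [abs_of_pos (exp_pos _)]
    exact exp_lt_one_iff.mpr (neg_lt_zero.mpr hc)
  refine ((hasDerivAt_Li2 h1 (exp_pos _).ne').comp c (hasDerivAt_exp_neg c)).congr_deriv ?_
  field_simp [(exp_pos (-c)).ne']

lemma hasDerivAt_zeta {c : ℝ} (hc : 0 < c) :
    HasDerivAt zeta (-(c ^ 2 * exp c / (exp c - 1) ^ 2)) c := by
  have he := exp_sub_one_ne_zero hc.ne'
  have hfrac := (hasDerivAt_pow 2 c).div ((hasDerivAt_exp c).sub_const 1) he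
  have hlog := ((hasDerivAt_id' c).const_mul 2).mul (hasDerivAt_log_one_sub_exp_neg hc.ne')
  have hdilog := (hasDerivAt_Li2_exp_neg hc).const_mul 2
  refine ((hfrac.sub hlog).add hdilog).congr_deriv ?_
  field_simp
  ring

lemma sq_mul_exp_div_exp_sub_one_sq_pos {c : ℝ} (hc : c ≠ 0) :
    0 < c ^ 2 * exp c / (exp c - 1) ^ 2 := by
  have he := exp_sub_one_ne_zero hc
  positivity

lemma strictAntiOn_zeta : StrictAntiOn zeta (Ioi 0) := by
  refine strictAntiOn_of_deriv_neg (convex_Ioi 0)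
    (fun c hc => (hasDerivAt_zeta hc).continuousAt.continuousWithinAt) fun c hc => ?_
  rw [interior_Ioi] at hc
  rw [(hasDerivAt_zeta hc).deriv]
  exact neg_neg_of_pos (sq_mul_exp_div_exp_sub_one_sq_pos hc.ne')

lemma tendsto_zeta_of {l : Filter ℝ} {a b d : ℝ}
    (h1 : Tendsto (fun c => c ^ 2 / (exp c - 1)) l (𝓝 a))
    (h2 : Tendsto (fun c => c * log (1 - exp (-c))) l (𝓝 b))
    (h3 : Tendsto (fun c => Li2 (exp (-c))) l (𝓝 d)) :
    Tendsto zeta l (𝓝 (a - 2 * b + 2 * d)) :=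
  ((h1.sub (h2.const_mul 2)).add (h3.const_mul 2)).congr fun c => by rw [zeta, mul_assoc]

lemma tendsto_div_exp_sub_one : Tendsto (fun c => c / (exp c - 1)) (𝓝[≠] 0) (𝓝 1) := by
  have h := (hasDerivAt_exp 0).tendsto_slope_zero
  simp only [zero_add, exp_zero, smul_eq_mul] at h
  simpa [div_eq_mul_inv, mul_comm] using h.inv₀ one_ne_zero

lemma tendsto_sq_div_exp_sub_one_nhdsNE :
    Tendsto (fun c => c ^ 2 / (exp c - 1)) (𝓝[≠] 0) (𝓝 0) := by
  have h := (tendsto_id.mono_left nhdsWithin_le_nhds).mul tendsto_div_exp_sub_one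
  simpa [sq, mul_div_assoc] using h

lemma tendsto_mul_log_one_sub_exp_neg_nhdsNE :
    Tendsto (fun c => c * log (1 - exp (-c))) (𝓝[≠] 0) (𝓝 0) := by
  have hu : Tendsto (fun c => 1 - exp (-c)) (𝓝[≠] 0) (𝓝 0) :=
    ((continuous_const.sub continuous_neg.rexp).tendsto' 0 0 (by simp)).mono_left
      nhdsWithin_le_nhds
  have hulogu := (continuous_mul_log.tendsto 0).comp hu
  have hratio := ((continuous_exp.tendsto 0).mono_left nhdsWithin_le_nhds).mul
    tendsto_div_exp_sub_one
  refine ((hratio.mul hulogu).congr' ?_).trans (by simp)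
  filter_upwards [self_mem_nhdsWithin] with c hc
  have he := exp_sub_one_ne_zero hc
  simp only [Function.comp_apply, exp_neg]
  field_simp

lemma exp_neg_mem_Icc {c : ℝ} (hc : 0 ≤ c) : exp (-c) ∈ Icc (-1) 1 :=
  ⟨by linarith [exp_pos (-c)], exp_le_one_iff.mpr (neg_nonpos.mpr hc)⟩

lemma tendsto_Li2_exp_neg_nhdsGT :
    Tendsto (fun c => Li2 (exp (-c))) (𝓝[>] 0) (𝓝 (π ^ 2 / 6)) := by
  have hexp : Tendsto (fun c => exp (-c)) (𝓝[>] 0) (𝓝[Icc (-1) 1] 1) := by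
    refine tendsto_nhdsWithin_iff.mpr ⟨?_, ?_⟩
    · exact (continuous_neg.rexp.tendsto' 0 1 (by simp)).mono_left nhdsWithin_le_nhds
    · filter_upwards [self_mem_nhdsWithin] with c hc using exp_neg_mem_Icc (le_of_lt hc)
  rw [← Li2_one]
  exact (continuousOn_Li2 1 ⟨by norm_num, le_rfl⟩).tendsto.comp hexp

lemma tendsto_sq_div_exp_sub_one_atTop :
    Tendsto (fun c => c ^ 2 / (exp c - 1)) atTop (𝓝 0) := by
  have h := (tendsto_pow_mul_exp_neg_atTop_nhds_zero 2).div
    (tendsto_exp_neg_atTop_nhds_zero.const_sub 1) (by norm_num)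
  refine (h.congr' ?_).trans (by simp)
  filter_upwards [eventually_gt_atTop 0] with c hc
  have he := exp_sub_one_ne_zero hc.ne'
  simp only [Pi.div_apply, exp_neg]
  field_simp

lemma tendsto_mul_log_one_sub_exp_neg_atTop :
    Tendsto (fun c => c * log (1 - exp (-c))) atTop (𝓝 0) := by
  have hslope : Tendsto (fun t => t⁻¹ * log (1 - t)) (𝓝[≠] 0) (𝓝 (-1)) := by
    simpa using (((hasDerivAt_id' (0 : ℝ)).const_sub 1).log (by norm_num)).tendsto_slope_zero
  have ht : Tendsto (fun c => exp (-c)) atTop (𝓝[≠] 0) :=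
    tendsto_nhdsWithin_iff.mpr
      ⟨tendsto_exp_neg_atTop_nhds_zero, .of_forall fun c => (exp_pos _).ne'⟩
  have h := (tendsto_pow_mul_exp_neg_atTop_nhds_zero 1).mul (hslope.comp ht)
  refine (h.congr fun c => ?_).trans (by simp)
  simp only [Function.comp_apply, pow_one]
  field_simp [(exp_pos (-c)).ne']

lemma tendsto_Li2_exp_neg_atTop : Tendsto (fun c => Li2 (exp (-c))) atTop (𝓝 0) := by
  have hexp : Tendsto (fun c => exp (-c)) atTop (𝓝[Icc (-1) 1] 0) :=
    tendsto_nhdsWithin_iff.mpr ⟨tendsto_exp_neg_atTop_nhds_zero,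
      (eventually_ge_atTop 0).mono fun c hc => exp_neg_mem_Icc hc⟩
  rw [← Li2_zero]
  exact (continuousOn_Li2 0 ⟨by norm_num, by norm_num⟩).tendsto.comp hexp

theorem zeta_properties :
    (∀ c : ℝ, 0 < c →
      HasDerivAt zeta (-(c ^ 2 * Real.exp c / (Real.exp c - 1) ^ 2)) c) ∧
    (∀ c : ℝ, 0 < c → -(c ^ 2 * Real.exp c / (Real.exp c - 1) ^ 2) < 0) ∧
    StrictAntiOn zeta (Set.Ioi 0) ∧
    Filter.Tendsto zeta (nhdsWithin 0 (Set.Ioi 0)) (nhds (π ^ 2 / 3)) ∧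
    Filter.Tendsto zeta Filter.atTop (nhds 0) := by
  refine ⟨fun _ => hasDerivAt_zeta,
    fun c hc => neg_neg_of_pos (sq_mul_exp_div_exp_sub_one_sq_pos hc.ne'), strictAntiOn_zeta,
    ?_, ?_⟩
  · have h := tendsto_zeta_of (tendsto_sq_div_exp_sub_one_nhdsNE.mono_left (nhdsGT_le_nhdsNE 0))
      (tendsto_mul_log_one_sub_exp_neg_nhdsNE.mono_left (nhdsGT_le_nhdsNE 0))
      tendsto_Li2_exp_neg_nhdsGT
    convert h using 2
    ring
  · simpa using tendsto_zeta_of tendsto_sq_div_exp_sub_one_atTop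
      tendsto_mul_log_one_sub_exp_neg_atTop tendsto_Li2_exp_neg_atTop
end
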